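/- Let k be a non-negative integer, let t > 0, let M ≥ 0, and let f : ℝ → ℝ be (2k+2)-times differentiable with |f⁽²ᵏ⁺²⁾(x)| ≤ M for all x. For a positive integer n let a_{m,n} = ∫ (x − t)^m dΓ(n, n/t)(x) denote the m-th central moment of the Gamma distribution with shape n and rate n/t. Then | ∫ f(x) dΓ(n, n/t)(x) − f(t) − Σ_{m=2}^{2k+1} (a_{m,n}/m!) f⁽ᵐ⁾(t) | ≤ (M/(2k+2)!) · a_{2k+2,n}. -/

import Mathlib

/-!
Taylor's theorem gives, pointwise in `x`,
`|f x - ∑_{m ≤ 2k+1} f⁽ᵐ⁾(t) (x - t)ᵐ / m!| ≤ M |x - t|^(2k+2) / (2k+2)!`,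
proved by induction on the order: the derivative of the Taylor remainder of `f` is the Taylor
remainder of `f'`, and integrating the derivative bound adds one power of `|x - t|`. The Gamma
distribution has moments of all orders (`x ^ j` tilts `Γ(a, r)` into a multiple of `Γ(a + j, r)`),
so the pointwise bound can be integrated against `Γ(n, n/t)`. Its mean is `t`, so the linear term
of the Taylor polynomial integrates to zero, and `2k + 2` is even, so
`|x - t|^(2k+2) = (x - t)^(2k+2)`.
-/

open MeasureTheory ProbabilityTheory Real Set
open scoped Interval

section Taylor

variable {E : Type*} [NormedAddCommGroup E] [NormedSpace ℝ E]

theorem norm_sub_le_of_norm_deriv_le_mul_pow [CompleteSpace E] {φ : ℝ → E}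
    {t C : ℝ} {p : ℕ} (hφ : Differentiable ℝ φ)
    (hbound : ∀ y, ‖deriv φ y‖ ≤ C * |y - t| ^ p) (x : ℝ) :
    ‖φ x - φ t‖ ≤ C * |x - t| ^ (p + 1) / (p + 1) := by
  have hC : Continuous fun y : ℝ => C * |y - t| ^ p := by fun_prop
  have hint : IntervalIntegrable (deriv φ) volume t x :=
    (hC.intervalIntegrable t x).mono_fun' (aestronglyMeasurable_deriv φ _) (ae_of_all _ hbound)
  calc ‖φ x - φ t‖ = ‖∫ y in Ι t x, deriv φ y‖ := by
        rw [← intervalIntegral.norm_integral_eq_norm_integral_uIoc,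
          intervalIntegral.integral_deriv_eq_sub (fun y _ => hφ y) hint]
    _ ≤ ∫ y in Ι t x, C * |y - t| ^ p :=
        norm_integral_le_of_norm_le hC.integrableOn_uIoc (ae_of_all _ hbound)
    _ = C * |x - t| ^ (p + 1) / (p + 1) := by
        rw [integral_const_mul, integral_pow_abs_sub_uIoc, mul_div_assoc]

theorem hasDerivAt_taylorWithinEval_univ_succ (f : ℝ → E) (n : ℕ) (t x : ℝ) :
    HasDerivAt (taylorWithinEval f (n + 1) univ t) (taylorWithinEval (deriv f) n univ t x) x := by
  simpa only [derivWithin_univ] using hasDerivAt_taylorWithinEval_succ (s := univ) (x₀ := t) f n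

theorem norm_sub_taylorWithinEval_univ_le [CompleteSpace E] {t M : ℝ} (n : ℕ) {f : ℝ → E}
    (hf : ∀ m ≤ n, Differentiable ℝ (iteratedDeriv m f))
    (hM : ∀ x, ‖iteratedDeriv (n + 1) f x‖ ≤ M) (x : ℝ) :
    ‖f x - taylorWithinEval f n univ t x‖ ≤ M * |x - t| ^ (n + 1) / (n + 1).factorial := by
  induction n generalizing f x with
  | zero =>
    have hf₀ : Differentiable ℝ f := by simpa using hf 0 le_rfl
    simpa [sub_eq_add_neg] using
      norm_sub_le_of_norm_deriv_le_mul_pow (p := 0) hf₀ (by simpa using hM) x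
  | succ n ih =>
    have hf₀ : Differentiable ℝ f := by simpa using hf 0 (Nat.zero_le _)
    have hderiv : ∀ y, deriv (fun y => f y - taylorWithinEval f (n + 1) univ t y) y =
        deriv f y - taylorWithinEval (deriv f) n univ t y := fun y =>
      ((hf₀ y).hasDerivAt.sub (hasDerivAt_taylorWithinEval_univ_succ f n t y)).deriv
    have hbound : ∀ y, ‖deriv (fun y => f y - taylorWithinEval f (n + 1) univ t y) y‖ ≤
        M / (n + 1).factorial * |y - t| ^ (n + 1) := fun y => by
      rw [hderiv, div_mul_eq_mul_div]
      refine ih (fun m hm => ?_) (fun z => ?_) y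
      · simpa [iteratedDeriv_succ'] using hf (m + 1) (by omega)
      · simpa [iteratedDeriv_succ'] using hM z
    have hdiff : Differentiable ℝ fun y => f y - taylorWithinEval f (n + 1) univ t y := fun y =>
      (hf₀ y).sub (hasDerivAt_taylorWithinEval_univ_succ f n t y).differentiableAt
    have := norm_sub_le_of_norm_deriv_le_mul_pow hdiff hbound x
    rw [taylorWithinEval_self, sub_self, sub_zero] at this
    convert this using 1
    push_cast [Nat.factorial_succ]
    field_simp

end Taylor

theorem taylorWithinEval_univ_eq_sum (f : ℝ → ℝ) (n : ℕ) (t x : ℝ) :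
    taylorWithinEval f n univ t x =
      ∑ m ∈ Finset.range (n + 1), iteratedDeriv m f t / m.factorial * (x - t) ^ m := by
  simp only [taylor_within_apply, iteratedDerivWithin_univ, smul_eq_mul]
  exact Finset.sum_congr rfl fun m _ => by ring

theorem abs_integral_sub_sum_moment_mul_iteratedDeriv_le {μ : Measure ℝ} {f : ℝ → ℝ}
    {t M : ℝ} (n : ℕ) (hμ : ∀ m ≤ n + 1, Integrable (fun x => (x - t) ^ m) μ)
    (hf : ∀ m ≤ n, Differentiable ℝ (iteratedDeriv m f))
    (hM : ∀ x, |iteratedDeriv (n + 1) f x| ≤ M) :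
    |∫ x, f x ∂μ - ∑ m ∈ Finset.range (n + 1),
        (∫ x, (x - t) ^ m ∂μ) / m.factorial * iteratedDeriv m f t| ≤
      M / (n + 1).factorial * ∫ x, |x - t| ^ (n + 1) ∂μ := by
  set P : ℝ → ℝ := fun x => ∑ m ∈ Finset.range (n + 1),
    iteratedDeriv m f t / m.factorial * (x - t) ^ m
  have hP_int : Integrable P μ :=
    integrable_finsetSum _ fun m hm => (hμ m (by grind)).const_mul _
  have hP_integral : ∫ x, P x ∂μ = ∑ m ∈ Finset.range (n + 1),
      (∫ x, (x - t) ^ m ∂μ) / m.factorial * iteratedDeriv m f t := by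
    rw [integral_finsetSum _ fun m hm => (hμ m (by grind)).const_mul _]
    refine Finset.sum_congr rfl fun m _ => ?_
    rw [integral_const_mul]
    ring
  have hrem : ∀ x, |f x - P x| ≤ M / (n + 1).factorial * |x - t| ^ (n + 1) := fun x => by
    have := norm_sub_taylorWithinEval_univ_le (t := t) n hf hM x
    rwa [taylorWithinEval_univ_eq_sum, Real.norm_eq_abs, ← div_mul_eq_mul_div] at this
  have hbound_int : Integrable (fun x => M / (n + 1).factorial * |x - t| ^ (n + 1)) μ := by
    simpa only [pow_abs] using ((hμ (n + 1) le_rfl).abs).const_mul _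
  have hrem_int : Integrable (fun x => f x - P x) μ := by
    have hf_cont : Continuous f := by simpa using (hf 0 (Nat.zero_le _)).continuous
    exact hbound_int.mono' (hf_cont.aestronglyMeasurable.sub hP_int.1) (ae_of_all _ hrem)
  calc _ = |∫ x, (f x - P x) ∂μ| := by
        have hf_int : Integrable f μ := (hrem_int.add hP_int).congr (ae_of_all _ fun x => by simp)
        rw [← hP_integral, integral_sub hf_int hP_int]
    _ ≤ ∫ x, M / (n + 1).factorial * |x - t| ^ (n + 1) ∂μ :=
        abs_integral_le_integral_abs.trans (integral_mono hrem_int.abs hbound_int hrem)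
    _ = M / (n + 1).factorial * ∫ x, |x - t| ^ (n + 1) ∂μ := integral_const_mul _ _

section Gamma

variable {a r : ℝ}

theorem gammaPDFReal_mul_pow (ha : 0 < a) (hr : 0 < r) (j : ℕ) (x : ℝ) :
    gammaPDFReal a r x * x ^ j =
      Gamma (a + j) / (Gamma a * r ^ j) * gammaPDFReal (a + j) r x := by
  unfold gammaPDFReal
  have hΓa := (Gamma_pos_of_pos ha).ne'
  split_ifs with hx
  · rcases Nat.eq_zero_or_pos j with rfl | hj
    · simp [hΓa]
    have hj' : a - 1 + j ≠ 0 := by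
      have : (1 : ℝ) ≤ j := Nat.one_le_cast.2 hj
      linarith
    rw [show a + j - 1 = a - 1 + j by ring, rpow_add_natCast' hx hj', rpow_add_natCast hr.ne']
    have := (Gamma_pos_of_pos (by positivity : 0 < a + j)).ne'
    field_simp
  · simp

theorem integral_gammaMeasure (ha : 0 < a) (hr : 0 < r) (g : ℝ → ℝ) :
    ∫ x, g x ∂gammaMeasure a r = ∫ x, gammaPDFReal a r x * g x := by
  rw [gammaMeasure, integral_withDensity_eq_integral_toReal_smul (f := gammaPDF a r)
    (measurable_gammaPDFReal a r).ennreal_ofReal (ae_of_all _ fun _ => ENNReal.ofReal_lt_top)]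
  simp [gammaPDF, ENNReal.toReal_ofReal (gammaPDFReal_nonneg ha hr _)]

theorem integrable_gammaMeasure_iff (ha : 0 < a) (hr : 0 < r) {g : ℝ → ℝ} :
    Integrable g (gammaMeasure a r) ↔ Integrable (fun x => gammaPDFReal a r x * g x) := by
  rw [gammaMeasure, integrable_withDensity_iff_integrable_smul' (f := gammaPDF a r)
    (measurable_gammaPDFReal a r).ennreal_ofReal (ae_of_all _ fun _ => ENNReal.ofReal_lt_top)]
  simp [gammaPDF, ENNReal.toReal_ofReal (gammaPDFReal_nonneg ha hr _)]

theorem integrable_gammaPDFReal (ha : 0 < a) (hr : 0 < r) : Integrable (gammaPDFReal a r) := by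
  have := isProbabilityMeasure_gammaMeasure ha hr
  simpa using (integrable_gammaMeasure_iff ha hr).1 (integrable_const (1 : ℝ))

theorem integral_gammaPDFReal (ha : 0 < a) (hr : 0 < r) : ∫ x, gammaPDFReal a r x = 1 := by
  have := isProbabilityMeasure_gammaMeasure ha hr
  simpa using (integral_gammaMeasure ha hr fun _ => 1).symm

theorem integrable_pow_gammaMeasure (ha : 0 < a) (hr : 0 < r) (j : ℕ) :
    Integrable (fun x => x ^ j) (gammaMeasure a r) := by
  rw [integrable_gammaMeasure_iff ha hr]
  simp_rw [gammaPDFReal_mul_pow ha hr]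
  exact (integrable_gammaPDFReal (by positivity) hr).const_mul _

theorem integral_pow_gammaMeasure (ha : 0 < a) (hr : 0 < r) (j : ℕ) :
    ∫ x, x ^ j ∂gammaMeasure a r = Gamma (a + j) / (Gamma a * r ^ j) := by
  rw [integral_gammaMeasure ha hr]
  simp_rw [gammaPDFReal_mul_pow ha hr]
  rw [integral_const_mul, integral_gammaPDFReal (by positivity) hr, mul_one]

theorem integral_id_gammaMeasure (ha : 0 < a) (hr : 0 < r) :
    ∫ x, x ∂gammaMeasure a r = a / r := by
  have := integral_pow_gammaMeasure ha hr 1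
  simp only [pow_one, Nat.cast_one, Gamma_add_one ha.ne'] at this
  rw [this, mul_comm (Gamma a), mul_div_mul_right _ _ (Gamma_pos_of_pos ha).ne']

end Gamma

theorem integrable_sub_pow_of_integrable_pow {μ : Measure ℝ}
    (hμ : ∀ j, Integrable (fun x => x ^ j) μ) (t : ℝ) (m : ℕ) :
    Integrable (fun x => (x - t) ^ m) μ := by
  simp_rw [sub_eq_add_neg, add_pow]
  exact integrable_finsetSum _ fun i _ => ((hμ i).mul_const _).mul_const _

theorem Finset.sum_range_eq_add_add_sum_Icc {M : Type*} [AddCommMonoid M] (F : ℕ → M) {n : ℕ}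
    (hn : 1 ≤ n) :
    ∑ m ∈ Finset.range (n + 1), F m = F 0 + F 1 + ∑ m ∈ Finset.Icc 2 n, F m := by
  rw [Finset.range_eq_Ico, Finset.sum_eq_sum_Ico_succ_bot (by omega),
    Finset.sum_eq_sum_Ico_succ_bot (by omega), Finset.Ico_add_one_right_eq_Icc]
  exact (add_assoc _ _ _).symm

/-- Taylor-type bound for the randomisation error: if `f` is `(2k+2)`-times differentiable
with `|f⁽²ᵏ⁺²⁾| ≤ M` everywhere, then, writing `a_{m,n}` for the `m`-th central moment of
the Gamma distribution with shape `n` and rate `n / t`,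
`|∫ f dΓ(n,n/t) - f(t) - ∑_{m=2}^{2k+1} (a_{m,n}/m!) f⁽ᵐ⁾(t)| ≤ (M/(2k+2)!) a_{2k+2,n}`. -/
theorem gamma_randomisation_taylor_bound (k : ℕ) (t M : ℝ) (ht : 0 < t) (f : ℝ → ℝ)
    (hf : ∀ m : ℕ, m < 2 * k + 2 → Differentiable ℝ (iteratedDeriv m f))
    (hf_bdd : ∀ x : ℝ, |iteratedDeriv (2 * k + 2) f x| ≤ M)
    (n : ℕ) (hn : 0 < n) :
    |(∫ x, f x ∂(gammaMeasure n ((n : ℝ) / t))) - f t -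
        ∑ m ∈ Finset.Icc 2 (2 * k + 1),
          (∫ x, (x - t) ^ m ∂(gammaMeasure n ((n : ℝ) / t))) / m.factorial *
            iteratedDeriv m f t| ≤
      M / (2 * k + 2).factorial *
        ∫ x, (x - t) ^ (2 * k + 2) ∂(gammaMeasure n ((n : ℝ) / t)) := by
  have ha : (0 : ℝ) < n := Nat.cast_pos.2 hn
  have hr : (0 : ℝ) < n / t := div_pos ha ht
  have := isProbabilityMeasure_gammaMeasure ha hr
  have hmoment := integrable_sub_pow_of_integrable_pow (integrable_pow_gammaMeasure ha hr) t
  have hmean : ∫ x, (x - t) ^ 1 ∂gammaMeasure n (n / t) = 0 := by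
    simp_rw [pow_one]
    rw [integral_sub (by simpa using integrable_pow_gammaMeasure ha hr 1) (integrable_const t),
      integral_id_gammaMeasure ha hr, div_div_cancel₀ ha.ne', integral_const]
    simp
  have key := abs_integral_sub_sum_moment_mul_iteratedDeriv_le (2 * k + 1)
    (fun m _ => hmoment m) (fun m hm => hf m (by omega)) hf_bdd
  rw [Finset.sum_range_eq_add_add_sum_Icc _ (by omega), hmean] at key
  simp_rw [(show Even (2 * k + 1 + 1) from ⟨k + 1, by ring⟩).pow_abs] at key
  simpa [sub_sub] using key
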